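/- Let T ⊆ [3k] × 𝒞 be a partial schedule, C ∈ 𝒞, and ν, ξ : 𝒞 → ℕ profiles with supp(ν) ⊆ {C}, supp(ξ) ⊆ {C}, and |T| + ‖ν‖ + ‖ξ‖ ≤ k/2. Then Σ_{A ∈ ℱ(T,ν)} Σ_{B ∈ ℱ(T,ξ)} Ẽ_T(A ∪ B) = (Σ_{A ∈ ℱ(T,ν)} Ẽ_T(A)) · (Σ_{B ∈ ℱ(T,ξ)} Ẽ_T(B)), where Ẽ_T(A ∪ B) = 0 whenever A ∪ B is not a partial schedule. -/

import Mathlib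

noncomputable section
open scoped Classical

/-- `S` is a partial schedule: every machine occurs in at most one pair of `S`. -/
def IsPartialSchedule {m : ℕ} {C : Type*} (S : Finset (Fin m × C)) : Prop :=
  ∀ p ∈ S, ∀ q ∈ S, p.1 = q.1 → p = q

/-- `δ_S(c)`: the number of machines that `S` connects to configuration `c`. -/
def deltaS {m : ℕ} {C : Type*} [DecidableEq C] (S : Finset (Fin m × C)) (c : C) : ℕ :=
  (S.filter fun e => e.2 = c).card

/-- The machine set `ℳ(S)` of `S`. -/
def machSet {m : ℕ} {C : Type*} (S : Finset (Fin m × C)) : Finset (Fin m) :=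
  S.image Prod.fst

/-- Falling factorial `(x)_b = x(x−1)⋯(x−b+1)`, with `(x)_0 = 1`. -/
def ffall : ℝ → ℕ → ℝ
  | _, 0 => 1
  | x, n + 1 => x * ffall (x - 1) n

/-- The conditional pseudoexpectation value
`Ẽ_T(S) = (1/(3k − |T|)_{|S|}) · ∏_{j=1}^{6} (k/2 − δ_T(C_j))_{δ_S(C_j)}`
if `S` is a partial schedule, and `0` otherwise. -/
def pexp (k : ℕ) (T S : Finset (Fin (3 * k) × Fin 6)) : ℝ :=
  if IsPartialSchedule S then
    (ffall ((3 * k : ℝ) - T.card) S.card)⁻¹ *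
      ∏ j : Fin 6, ffall ((k : ℝ) / 2 - deltaS T j) (deltaS S j)
  else 0

/-- A profile `γ : 𝒞 → ℕ` has norm `‖γ‖ = Σ_C γ(C)`. -/
def pnorm (γ : Fin 6 → ℕ) : ℕ := ∑ c : Fin 6, γ c

/-- `ℱ(T,γ)`: partial schedules `A` with `ℳ(A) ⊆ [m] ∖ ℳ(T)` in `γ`-profile. -/
def extFam (k : ℕ) (T : Finset (Fin (3 * k) × Fin 6)) (γ : Fin 6 → ℕ) :
    Finset (Finset (Fin (3 * k) × Fin 6)) :=
  Finset.univ.filter fun A =>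
    IsPartialSchedule A ∧ Disjoint (machSet A) (machSet T) ∧ ∀ c, deltaS A c = γ c

/-!
On a single configuration `c`, the families `ℱ(T,ν)` and `ℱ(T,ξ)` consist of the schedules
putting an `a`-set resp. `b`-set of the `N = 3k − |T|` free machines on `c` (`a = ν(c)`,
`b = ξ(c)`), and `Ẽ_T` of such a schedule on `r` machines is `G(r) = (x)_r / (N)_r` with
`x = k/2 − δ_T(c)`. For a fixed `a`-set `s`, sorting the `b`-sets `u` by `i = |u ∖ s|` gives
`Σ_u G(|s ∪ u|) = Σ_{i+j=b} C(N−a,i) C(a,j) G(a+i)`. Splitting `(x)_{a+i} = (x)_a (x−a)_i` and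
`(N)_{a+i} = (N)_a (N−a)_i` and applying Chu–Vandermonde to `(x)_b = ((x−a)+a)_b` turns this into
`G(a) · C(N,b) G(b) = G(|s|) · Σ_u G(|u|)`, as long as `a + b ≤ N`.
-/

open Finset Function Polynomial

lemma ffall_eq_eval_descPochhammer (x : ℝ) (n : ℕ) : ffall x n = (descPochhammer ℝ n).eval x := by
  induction n generalizing x with
  | zero => simp [ffall]
  | succ n ih => simp [ffall, descPochhammer_succ_left, ih]

lemma ffall_add (x : ℝ) (a b : ℕ) : ffall x (a + b) = ffall x a * ffall (x - a) b := by
  simp [ffall_eq_eval_descPochhammer, ← descPochhammer_mul, eval_comp]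

lemma ffall_natCast (n r : ℕ) : ffall n r = n.descFactorial r := by
  rw [ffall_eq_eval_descPochhammer, descPochhammer_eval_eq_descFactorial]

lemma ffall_natCast_eq_factorial_mul_choose (n r : ℕ) :
    ffall n r = r.factorial * n.choose r := by
  rw [ffall_natCast, Nat.descFactorial_eq_factorial_mul_choose, Nat.cast_mul]

lemma ffall_natCast_ne_zero {n r : ℕ} (h : r ≤ n) : ffall n r ≠ 0 := by
  rw [ffall_natCast]
  exact_mod_cast fun h0 => (Nat.descFactorial_eq_zero_iff_lt.1 h0).not_ge h

lemma add_ffall (y z : ℝ) (n : ℕ) :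
    ffall (y + z) n = ∑ p ∈ antidiagonal n, n.choose p.1 * (ffall y p.1 * ffall z p.2) := by
  have h (x : ℝ) (r : ℕ) : ffall x r = (descPochhammer ℤ r).smeval x := by
    rw [← aeval_eq_smeval, aeval_def, algebraMap_int_eq, ← eval_map, descPochhammer_map,
      ffall_eq_eval_descPochhammer]
  simp only [h]
  exact Ring.descPochhammer_smeval_add n (Commute.all y z)

lemma sum_antidiagonal_ffall_div_factorial_mul_choose (y : ℝ) (a b : ℕ) :
    ∑ p ∈ antidiagonal b, ffall y p.1 / p.1.factorial * a.choose p.2 =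
      ffall (y + a) b / b.factorial := by
  rw [add_ffall, sum_div]
  refine sum_congr rfl fun p hp => ?_
  obtain rfl := mem_antidiagonal.1 hp
  have : ((p.1 + p.2).choose p.2 : ℝ) ≠ 0 := by
    exact_mod_cast (Nat.choose_pos (Nat.le_add_left _ _)).ne'
  rw [ffall_natCast_eq_factorial_mul_choose, Nat.choose_symm_add,
    ← Nat.add_choose_mul_factorial_mul_factorial]
  push_cast
  field_simp

lemma sum_antidiagonal_choose_mul_ffall_div (x : ℝ) {N a b : ℕ} (hab : a + b ≤ N) :
    ∑ p ∈ antidiagonal b,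
        ((N - a).choose p.1 * a.choose p.2 : ℝ) * (ffall x (a + p.1) / ffall N (a + p.1)) =
      N.choose b * (ffall x a / ffall N a) * (ffall x b / ffall N b) := by
  have hNa : ffall N a ≠ 0 := ffall_natCast_ne_zero (by omega)
  have hterm : ∀ p ∈ antidiagonal b,
      ((N - a).choose p.1 * a.choose p.2 : ℝ) * (ffall x (a + p.1) / ffall N (a + p.1)) =
        ffall x a / ffall N a * (ffall (x - a) p.1 / p.1.factorial * a.choose p.2) := by
    intro p hp
    have : ((N - a).choose p.1 : ℝ) ≠ 0 := by
      exact_mod_cast (Nat.choose_pos (by have := mem_antidiagonal.1 hp; omega)).ne'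
    rw [ffall_add x, ffall_add (N : ℝ), ← Nat.cast_sub (by omega),
      ffall_natCast_eq_factorial_mul_choose (N - a)]
    field_simp
  have : (N.choose b : ℝ) ≠ 0 := by exact_mod_cast (Nat.choose_pos (by omega)).ne'
  rw [sum_congr rfl hterm, ← mul_sum, sum_antidiagonal_ffall_div_factorial_mul_choose,
    sub_add_cancel, ffall_natCast_eq_factorial_mul_choose N b]
  field_simp

lemma sum_powersetCard_card_sdiff_eq_sum_antidiagonal {α β : Type*} [DecidableEq α]
    [AddCommMonoid β] {M s : Finset α} (hs : s ⊆ M) (b : ℕ) (f : ℕ → β) :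
    ∑ u ∈ powersetCard b M, f #(u \ s) =
      ∑ p ∈ antidiagonal b, ((#M - #s).choose p.1 * (#s).choose p.2) • f p.1 := by
  have hsplit {v w : Finset α} (hv : v ⊆ M \ s) (hw : w ⊆ s) :
      (v ∪ w) \ s = v ∧ (v ∪ w) ∩ s = w := by
    constructor <;> grind
  calc ∑ u ∈ powersetCard b M, f #(u \ s)
      = ∑ q ∈ (antidiagonal b).sigma (fun p => powersetCard p.1 (M \ s) ×ˢ powersetCard p.2 s),
          f q.1.1 := by
        refine sum_nbij' (fun u => ⟨(#(u \ s), #(u ∩ s)), (u \ s, u ∩ s)⟩)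
          (fun q => q.2.1 ∪ q.2.2) ?_ ?_ (fun u _ => sdiff_union_inter u s) ?_ fun _ _ => rfl
        · intro u hu
          simp only [mem_powersetCard] at hu
          simp only [mem_sigma, HasAntidiagonal.mem_antidiagonal, mem_product, mem_powersetCard,
            and_true]
          exact ⟨hu.2 ▸ card_sdiff_add_card_inter u s, sdiff_subset_sdiff hu.1 le_rfl,
            inter_subset_right⟩
        · rintro ⟨⟨i, j⟩, v, w⟩ hq
          simp only [mem_sigma, HasAntidiagonal.mem_antidiagonal, mem_product,
            mem_powersetCard] at hq ⊢
          obtain ⟨rfl, ⟨hv, rfl⟩, hw, rfl⟩ := hq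
          grind
        · rintro ⟨⟨i, j⟩, v, w⟩ hq
          simp only [mem_sigma, HasAntidiagonal.mem_antidiagonal, mem_product,
            mem_powersetCard] at hq
          obtain ⟨-, ⟨hv, rfl⟩, hw, rfl⟩ := hq
          simp only [(hsplit hv hw).1, (hsplit hv hw).2]
    _ = _ := by
        rw [sum_sigma]
        simp [card_sdiff_of_subset hs]

lemma sum_powersetCard_ffall_card_union_div {α : Type*} [DecidableEq α] (x : ℝ)
    {M s : Finset α} (hs : s ⊆ M) {b : ℕ} (hb : #s + b ≤ #M) :
    ∑ u ∈ powersetCard b M, ffall x #(s ∪ u) / ffall #M #(s ∪ u) =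
      (#M).choose b * (ffall x #s / ffall #M #s) * (ffall x b / ffall #M b) := by
  have hcard (u : Finset α) : #(s ∪ u) = #s + #(u \ s) := by
    rw [union_comm, ← card_sdiff_add_card, add_comm]
  simp only [hcard]
  rw [sum_powersetCard_card_sdiff_eq_sum_antidiagonal hs b
    (fun i => ffall x (#s + i) / ffall #M (#s + i))]
  simp only [nsmul_eq_mul, Nat.cast_mul]
  exact sum_antidiagonal_choose_mul_ffall_div x hb

theorem sum_powersetCard_sum_powersetCard_ffall_card_union_div {α : Type*} [DecidableEq α]
    (x : ℝ) (M : Finset α) {a b : ℕ} (hab : a + b ≤ #M) :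
    ∑ s ∈ powersetCard a M, ∑ u ∈ powersetCard b M, ffall x #(s ∪ u) / ffall #M #(s ∪ u) =
      (∑ s ∈ powersetCard a M, ffall x #s / ffall #M #s) *
        (∑ u ∈ powersetCard b M, ffall x #u / ffall #M #u) := by
  have hconst (n : ℕ) : ∑ s ∈ powersetCard n M, ffall x #s / ffall #M #s =
      (#M).choose n * (ffall x n / ffall #M n) := by
    rw [sum_congr rfl fun s hs => by rw [(mem_powersetCard.1 hs).2], sum_const,
      card_powersetCard, nsmul_eq_mul]
  calc _ = ∑ s ∈ powersetCard a M,
        (#M).choose b * (ffall x a / ffall #M a) * (ffall x b / ffall #M b) :=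
        sum_congr rfl fun s hs => by
          obtain ⟨hsM, rfl⟩ := mem_powersetCard.1 hs
          exact sum_powersetCard_ffall_card_union_div x hsM hab
    _ = _ := by
      rw [sum_const, card_powersetCard, hconst, hconst, nsmul_eq_mul]
      ring

section Schedule

variable {m : ℕ} {C : Type*}

def constSchedule (c : C) (s : Finset (Fin m)) : Finset (Fin m × C) :=
  s.map (Embedding.sectL (Fin m) c)

@[simp]
lemma mem_constSchedule {c : C} {s : Finset (Fin m)} {p : Fin m × C} :
    p ∈ constSchedule c s ↔ p.1 ∈ s ∧ p.2 = c := by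
  obtain ⟨i, c'⟩ := p
  simp [constSchedule, eq_comm]

lemma constSchedule_injective (c : C) : Injective (constSchedule (m := m) c) :=
  map_injective _

@[simp]
lemma card_constSchedule (c : C) (s : Finset (Fin m)) : #(constSchedule c s) = #s :=
  card_map _

lemma constSchedule_union [DecidableEq C] (c : C) (s t : Finset (Fin m)) :
    constSchedule c (s ∪ t) = constSchedule c s ∪ constSchedule c t :=
  map_union _ _

lemma isPartialSchedule_constSchedule (c : C) (s : Finset (Fin m)) :
    IsPartialSchedule (constSchedule c s) := by
  rintro ⟨i, c₁⟩ hp ⟨j, c₂⟩ hq (rfl : i = j)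
  simp_all

@[simp]
lemma machSet_constSchedule (c : C) (s : Finset (Fin m)) : machSet (constSchedule c s) = s := by
  ext i
  simp [machSet]

lemma deltaS_constSchedule [DecidableEq C] (c c' : C) (s : Finset (Fin m)) :
    deltaS (constSchedule c s) c' = if c' = c then #s else 0 := by
  split_ifs with h
  · subst h
    rw [deltaS, filter_true_of_mem fun p hp => (mem_constSchedule.1 hp).2, card_constSchedule]
  · rw [deltaS, filter_false_of_mem fun p hp hpc => h (hpc.symm.trans (mem_constSchedule.1 hp).2),
      card_empty]

lemma eq_constSchedule_machSet {c : C} {A : Finset (Fin m × C)} (hc : ∀ p ∈ A, p.2 = c) :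
    A = constSchedule c (machSet A) := by
  ext ⟨i, c'⟩
  simp only [mem_constSchedule, machSet, mem_image]
  constructor
  · exact fun h => ⟨⟨_, h, rfl⟩, hc _ h⟩
  · rintro ⟨⟨p, hp, rfl⟩, rfl⟩
    rwa [← hc p hp]

lemma card_machSet {A : Finset (Fin m × C)} (hA : IsPartialSchedule A) : #(machSet A) = #A :=
  card_image_of_injOn fun p hp q hq h => hA p hp q hq h

end Schedule

lemma pnorm_eq_of_support_subset {γ : Fin 6 → ℕ} {c : Fin 6} (hγ : ∀ c', 0 < γ c' → c' = c) :
    pnorm γ = γ c :=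
  sum_eq_single c (fun c' _ hc' => Nat.eq_zero_of_not_pos fun h => hc' (hγ c' h))
    (fun h => (h (mem_univ c)).elim)

lemma extFam_eq_image_constSchedule {k : ℕ} (T : Finset (Fin (3 * k) × Fin 6))
    {γ : Fin 6 → ℕ} {c : Fin 6} (hγ : ∀ c', 0 < γ c' → c' = c) :
    extFam k T γ = (powersetCard (γ c) (machSet T)ᶜ).image (constSchedule c) := by
  ext A
  simp only [extFam, mem_filter, mem_univ, true_and, mem_image, mem_powersetCard]
  constructor
  · rintro ⟨hA, hAT, hδ⟩
    have hc : ∀ p ∈ A, p.2 = c := fun p hp =>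
      hγ _ (hδ p.2 ▸ card_pos.2 ⟨p, mem_filter.2 ⟨hp, rfl⟩⟩)
    refine ⟨machSet A, ⟨subset_compl_iff_disjoint_right.2 hAT, ?_⟩,
      (eq_constSchedule_machSet hc).symm⟩
    rw [card_machSet hA, ← hδ c, eq_constSchedule_machSet hc, deltaS_constSchedule, if_pos rfl,
      card_constSchedule]
  · rintro ⟨s, ⟨hsT, hs⟩, rfl⟩
    refine ⟨isPartialSchedule_constSchedule c s, ?_, fun c' => ?_⟩
    · rw [machSet_constSchedule]
      exact subset_compl_iff_disjoint_right.1 hsT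
    · rw [deltaS_constSchedule]
      split_ifs with h
      · rw [h, hs]
      · exact (Nat.eq_zero_of_not_pos fun hpos => h (hγ c' hpos)).symm

lemma pexp_constSchedule {k : ℕ} {T : Finset (Fin (3 * k) × Fin 6)} (hT : IsPartialSchedule T)
    (c : Fin 6) (s : Finset (Fin (3 * k))) :
    pexp k T (constSchedule c s) =
      ffall ((k : ℝ) / 2 - deltaS T c) #s / ffall #(machSet T)ᶜ #s := by
  have hTk : #T ≤ 3 * k := by simpa [card_machSet hT] using card_le_univ (machSet T)
  have hN : (3 * k : ℝ) - #T = #(machSet T)ᶜ := by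
    rw [card_compl, Fintype.card_fin, card_machSet hT, Nat.cast_sub hTk, Nat.cast_mul,
      Nat.cast_ofNat]
  rw [pexp, if_pos (isPartialSchedule_constSchedule c s), hN, card_constSchedule,
    Fintype.prod_eq_single c fun j hj => by rw [deltaS_constSchedule, if_neg hj]; rfl,
    deltaS_constSchedule, if_pos rfl, inv_mul_eq_div]

theorem pexp_pseudoindependence_single_support_general (k : ℕ)
    (T : Finset (Fin (3 * k) × Fin 6)) (hT : IsPartialSchedule T)
    (c : Fin 6) (ν ξ : Fin 6 → ℕ)
    (hν : ∀ c' : Fin 6, 0 < ν c' → c' = c)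
    (hξ : ∀ c' : Fin 6, 0 < ξ c' → c' = c)
    (hsize : (T.card : ℝ) + (pnorm ν : ℝ) + (pnorm ξ : ℝ) ≤ (k : ℝ) / 2) :
    ∑ A ∈ extFam k T ν, ∑ B ∈ extFam k T ξ, pexp k T (A ∪ B) =
      (∑ A ∈ extFam k T ν, pexp k T A) * (∑ B ∈ extFam k T ξ, pexp k T B) := by
  have hfree : ν c + ξ c ≤ #(machSet T)ᶜ := by
    rw [pnorm_eq_of_support_subset hν, pnorm_eq_of_support_subset hξ] at hsize
    have : ν c + ξ c + #T ≤ 3 * k := by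
      exact_mod_cast (by linarith : (ν c + ξ c + #T : ℝ) ≤ 3 * k)
    rw [card_compl, Fintype.card_fin, card_machSet hT]
    omega
  rw [extFam_eq_image_constSchedule T hν, extFam_eq_image_constSchedule T hξ]
  simp only [sum_image fun _ _ _ _ h => constSchedule_injective c h, ← constSchedule_union,
    pexp_constSchedule hT]
  exact sum_powersetCard_sum_powersetCard_ffall_card_union_div _ _ hfree

/-- Pseudoindependence for profiles supported on a single common configuration `C`: for a
partial schedule `T`, `C ∈ 𝒞`, and profiles `ν, ξ` with `supp(ν) ⊆ {C}`, `supp(ξ) ⊆ {C}` and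
`|T| + ‖ν‖ + ‖ξ‖ ≤ k/2`,
`Σ_{A ∈ ℱ(T,ν)} Σ_{B ∈ ℱ(T,ξ)} Ẽ_T(A ∪ B) = (Σ_{A} Ẽ_T(A)) · (Σ_{B} Ẽ_T(B))`
(where `Ẽ_T(A ∪ B) = 0` whenever `A ∪ B` is not a partial schedule). -/
theorem pexp_pseudoindependence_single_support (k : ℕ) (hk : Odd k) (hkpos : 0 < k)
    (T : Finset (Fin (3 * k) × Fin 6)) (hT : IsPartialSchedule T)
    (c : Fin 6) (ν ξ : Fin 6 → ℕ)
    (hν : ∀ c' : Fin 6, 0 < ν c' → c' = c)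
    (hξ : ∀ c' : Fin 6, 0 < ξ c' → c' = c)
    (hsize : (T.card : ℝ) + (pnorm ν : ℝ) + (pnorm ξ : ℝ) ≤ (k : ℝ) / 2) :
    ∑ A ∈ extFam k T ν, ∑ B ∈ extFam k T ξ, pexp k T (A ∪ B) =
      (∑ A ∈ extFam k T ν, pexp k T A) * (∑ B ∈ extFam k T ξ, pexp k T B) :=
  pexp_pseudoindependence_single_support_general k T hT c ν ξ hν hξ hsize
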